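/- Let a < b < c < d be real numbers, write s = d+c-a-b, let θ_l, θ_r ∈ [0,1], α ∈ (0,1), and set k = α·θ_l − (1-α)·θ_r, V(x) = (x-a)²/(s(b-a)), L(x) = (2x-a-b)/s, W(x) = (d-x)²/(s(d-c)). Define F : ℝ → ℝ by F(x) = 0 for x ≤ a; F(x) = V(x) − k·V(x) for a < x ≤ a + (b-a)/√2; F(x) = V(x) − k·((b-a)/s − V(x)) for a + (b-a)/√2 ≤ x < b; F(b) = (b-a)/s; F(x) = L(x) − k·(L(x) − (b-a)/s) for b < x ≤ (b+c)/2; F(x) = L(x) − k·((2c-a-b)/s − L(x)) for (b+c)/2 ≤ x < c; F(c) = (2c-a-b)/s; F(x) = 1 − W(x) − k·((d-c)/s − W(x)) for c < x ≤ d − (d-c)/√2; F(x) = 1 − W(x) − k·W(x) for d − (d-c)/√2 ≤ x < d; F(x) = 1 for x ≥ d. Then F is monotone increasing on ℝ (i.e., x ≤ y implies F(x) ≤ F(y)). -/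

import Mathlib

/-- `V(x) = (x-a)²/(s(b-a))` where `s = d+c-a-b`. -/
noncomputable def Vtrap (a b c d x : ℝ) : ℝ := (x - a) ^ 2 / ((d + c - a - b) * (b - a))

/-- `L(x) = (2x-a-b)/s` where `s = d+c-a-b`. -/
noncomputable def Ltrap (a b c d x : ℝ) : ℝ := (2 * x - a - b) / (d + c - a - b)

/-- `W(x) = (d-x)²/(s(d-c))` where `s = d+c-a-b`. -/
noncomputable def Wtrap (a b c d x : ℝ) : ℝ := (d - x) ^ 2 / ((d + c - a - b) * (d - c))

/-- The reduced single-fold uncertainty distribution, via the α-optimistic value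
criterion with `k = α·θ_l − (1-α)·θ_r`, of the trapezoidal two-fold uncertain
variable with parameters `a < b < c < d`. -/
noncomputable def trapReduced (a b c d k : ℝ) (x : ℝ) : ℝ :=
  if x ≤ a then 0
  else if x ≤ a + (b - a) / Real.sqrt 2 then Vtrap a b c d x - k * Vtrap a b c d x
  else if x < b then
    Vtrap a b c d x - k * ((b - a) / (d + c - a - b) - Vtrap a b c d x)
  else if x = b then (b - a) / (d + c - a - b)
  else if x ≤ (b + c) / 2 then
    Ltrap a b c d x - k * (Ltrap a b c d x - (b - a) / (d + c - a - b))
  else if x < c then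
    Ltrap a b c d x - k * ((2 * c - a - b) / (d + c - a - b) - Ltrap a b c d x)
  else if x = c then (2 * c - a - b) / (d + c - a - b)
  else if x ≤ d - (d - c) / Real.sqrt 2 then
    1 - Wtrap a b c d x - k * ((d - c) / (d + c - a - b) - Wtrap a b c d x)
  else if x < d then 1 - Wtrap a b c d x - k * Wtrap a b c d x
  else 1

/-!
With `k = α θ_l - (1 - α) θ_r ∈ [-1, 1]`, on each of the six closed pieces cut out by
`a, a + (b - a)/√2, b, (b + c)/2, c, d - (d - c)/√2, d` the function `F` is `V`, `L` or `-W`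
times `1 ± k ≥ 0`, plus a constant, hence monotone. The break points are exactly where `V`, `L`
and `W` reach the middle of their ranges, so adjacent pieces agree there, and monotone functions
on abutting closed intervals glue.
-/

open Set Real

theorem MonotoneOn.Icc_union_Icc {α β : Type*} [LinearOrder α] [Preorder β] {f : α → β}
    {p m q : α} (h₁ : MonotoneOn f (Icc p m)) (h₂ : MonotoneOn f (Icc m q)) (hpm : p ≤ m)
    (hmq : m ≤ q) : MonotoneOn f (Icc p q) := by
  rw [← Icc_union_Icc_eq_Icc hpm hmq]
  exact h₁.union_right h₂ (isGreatest_Icc hpm) (isLeast_Icc hmq)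

lemma sq_div_sqrt_two_div_mul {t : ℝ} (s : ℝ) (ht : t ≠ 0) :
    (t / √2) ^ 2 / (s * t) = t / s / 2 := by
  rw [div_pow, sq_sqrt zero_le_two, sq, div_div, div_div, mul_comm s, mul_left_comm,
    mul_div_mul_left _ _ ht, mul_comm]

lemma add_div_sqrt_two_mem_Ioo {p q : ℝ} (h : p < q) : p + (q - p) / √2 ∈ Ioo p q := by
  have := div_lt_self (sub_pos.2 h) one_lt_sqrt_two
  have : 0 < (q - p) / √2 := by have := sub_pos.2 h; positivity
  constructor <;> linarith

lemma sub_div_sqrt_two_mem_Ioo {p q : ℝ} (h : p < q) : q - (q - p) / √2 ∈ Ioo p q := by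
  have := div_lt_self (sub_pos.2 h) one_lt_sqrt_two
  have : 0 < (q - p) / √2 := by have := sub_pos.2 h; positivity
  constructor <;> linarith

section Trapezoid

variable {a b c d : ℝ}

lemma Vtrap_monotoneOn (hab : a ≤ b) (hs : 0 ≤ d + c - a - b) :
    MonotoneOn (Vtrap a b c d) (Ici a) := fun x hx y _ hxy => by
  have : 0 ≤ (d + c - a - b) * (b - a) := mul_nonneg hs (sub_nonneg.2 hab)
  have : 0 ≤ x - a := sub_nonneg.2 hx
  unfold Vtrap
  gcongr

lemma Ltrap_monotone (hs : 0 ≤ d + c - a - b) : Monotone (Ltrap a b c d) := fun x y hxy => by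
  unfold Ltrap
  gcongr

lemma Wtrap_antitoneOn (hcd : c ≤ d) (hs : 0 ≤ d + c - a - b) :
    AntitoneOn (Wtrap a b c d) (Iic d) := fun x _ y hy hxy => by
  have : 0 ≤ (d + c - a - b) * (d - c) := mul_nonneg hs (sub_nonneg.2 hcd)
  have : 0 ≤ d - y := sub_nonneg.2 hy
  unfold Wtrap
  gcongr

lemma Vtrap_left_knot (hab : a < b) :
    Vtrap a b c d (a + (b - a) / √2) = (b - a) / (d + c - a - b) / 2 := by
  rw [Vtrap, add_sub_cancel_left, sq_div_sqrt_two_div_mul _ (sub_pos.2 hab).ne']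

lemma Wtrap_right_knot (hcd : c < d) :
    Wtrap a b c d (d - (d - c) / √2) = (d - c) / (d + c - a - b) / 2 := by
  rw [Wtrap, sub_sub_cancel, sq_div_sqrt_two_div_mul _ (sub_pos.2 hcd).ne']

lemma Vtrap_right (hab : a < b) : Vtrap a b c d b = (b - a) / (d + c - a - b) := by
  rw [Vtrap, sq, mul_comm (d + c - a - b), mul_div_mul_left _ _ (sub_pos.2 hab).ne']

lemma Wtrap_left (hcd : c < d) : Wtrap a b c d c = (d - c) / (d + c - a - b) := by
  rw [Wtrap, sq, mul_comm (d + c - a - b), mul_div_mul_left _ _ (sub_pos.2 hcd).ne']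

variable (k : ℝ)

lemma trapReduced_eqOn_Iic : EqOn (trapReduced a b c d k) 0 (Iic a) := fun _ hx => if_pos hx

lemma trapReduced_eqOn_left₁ :
    EqOn (trapReduced a b c d k) (fun x => (1 - k) * Vtrap a b c d x)
      (Icc a (a + (b - a) / √2)) := by
  rintro x ⟨hax, hxm⟩
  rw [trapReduced]
  rcases hax.eq_or_lt with h | hax
  · subst x
    split_ifs <;> first | (exfalso; linarith) | contradiction | simp [Vtrap]
  · split_ifs <;> first | (exfalso; linarith) | contradiction | ring

lemma trapReduced_eqOn_left₂ (hab : a < b) :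
    EqOn (trapReduced a b c d k)
      (fun x => (1 + k) * Vtrap a b c d x - k * ((b - a) / (d + c - a - b)))
      (Icc (a + (b - a) / √2) b) := by
  obtain ⟨hm₁, hm₂⟩ := add_div_sqrt_two_mem_Ioo hab
  rintro x ⟨hmx, hxb⟩
  rw [trapReduced]
  rcases hmx.eq_or_lt with h | hmx
  · subst x
    split_ifs <;>
      first | (exfalso; linarith) | contradiction | (simp only [Vtrap_left_knot hab]; ring)
  rcases hxb.eq_or_lt with h | hxb
  · subst x
    split_ifs <;> first | (exfalso; linarith) | contradiction | (simp only [Vtrap_right hab]; ring)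
  · split_ifs <;> first | (exfalso; linarith) | contradiction | ring

lemma trapReduced_eqOn_mid₁ (hab : a < b) :
    EqOn (trapReduced a b c d k)
      (fun x => (1 - k) * Ltrap a b c d x + k * ((b - a) / (d + c - a - b)))
      (Icc b ((b + c) / 2)) := by
  obtain ⟨hm₁, hm₂⟩ := add_div_sqrt_two_mem_Ioo hab
  rintro x ⟨hbx, hxm⟩
  rw [trapReduced]
  rcases hbx.eq_or_lt with h | hbx
  · subst x
    split_ifs <;> first | (exfalso; linarith) | contradiction | (simp only [Ltrap]; ring)
  · split_ifs <;> first | (exfalso; linarith) | contradiction | ring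

lemma trapReduced_eqOn_mid₂ (hab : a < b) (hbc : b < c) :
    EqOn (trapReduced a b c d k)
      (fun x => (1 + k) * Ltrap a b c d x - k * ((2 * c - a - b) / (d + c - a - b)))
      (Icc ((b + c) / 2) c) := by
  obtain ⟨hm₁, hm₂⟩ := add_div_sqrt_two_mem_Ioo hab
  rintro x ⟨hmx, hxc⟩
  rw [trapReduced]
  rcases hmx.eq_or_lt with h | hmx
  · subst x
    split_ifs <;> first | (exfalso; linarith) | contradiction | (simp only [Ltrap]; ring)
  rcases hxc.eq_or_lt with h | hxc
  · subst x
    split_ifs <;> first | (exfalso; linarith) | contradiction | (simp only [Ltrap]; ring)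
  · split_ifs <;> first | (exfalso; linarith) | contradiction | ring

lemma trapReduced_eqOn_right₁ (hab : a < b) (hbc : b < c) (hcd : c < d) :
    EqOn (trapReduced a b c d k)
      (fun x => 1 - k * ((d - c) / (d + c - a - b)) - (1 - k) * Wtrap a b c d x)
      (Icc c (d - (d - c) / √2)) := by
  obtain ⟨hm₁, hm₂⟩ := add_div_sqrt_two_mem_Ioo hab
  have hs : d + c - a - b ≠ 0 := by linarith
  rintro x ⟨hcx, hxm⟩
  rw [trapReduced]
  rcases hcx.eq_or_lt with h | hcx
  · subst x
    split_ifs <;>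
      first | (exfalso; linarith) | contradiction | (simp only [Wtrap_left hcd]; field_simp; ring)
  · split_ifs <;> first | (exfalso; linarith) | contradiction | ring

lemma trapReduced_eqOn_right₂ (hab : a < b) (hbc : b < c) (hcd : c < d) :
    EqOn (trapReduced a b c d k) (fun x => 1 - (1 + k) * Wtrap a b c d x)
      (Icc (d - (d - c) / √2) d) := by
  obtain ⟨hm₁, hm₂⟩ := add_div_sqrt_two_mem_Ioo hab
  obtain ⟨hm₃, hm₄⟩ := sub_div_sqrt_two_mem_Ioo hcd
  rintro x ⟨hmx, hxd⟩
  rw [trapReduced]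
  rcases hmx.eq_or_lt with h | hmx
  · subst x
    split_ifs <;>
      first | (exfalso; linarith) | contradiction | (simp only [Wtrap_right_knot hcd]; ring)
  rcases hxd.eq_or_lt with h | hxd
  · subst x
    split_ifs <;> first | (exfalso; linarith) | contradiction | simp [Wtrap]
  · split_ifs <;> first | (exfalso; linarith) | contradiction | ring

lemma trapReduced_eqOn_Ici (hab : a < b) (hbc : b < c) (hcd : c < d) :
    EqOn (trapReduced a b c d k) 1 (Ici d) := by
  obtain ⟨hm₁, hm₂⟩ := add_div_sqrt_two_mem_Ioo hab
  obtain ⟨hm₃, hm₄⟩ := sub_div_sqrt_two_mem_Ioo hcd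
  intro x hdx
  rw [mem_Ici] at hdx
  rw [trapReduced]
  split_ifs <;> first | (exfalso; linarith) | contradiction | rfl

lemma trapReduced_monotoneOn_left (hab : a < b) (hbc : b < c) (hcd : c < d) (hk₀ : -1 ≤ k)
    (hk₁ : k ≤ 1) : MonotoneOn (trapReduced a b c d k) (Icc a b) := by
  obtain ⟨hm₁, hm₂⟩ := add_div_sqrt_two_mem_Ioo hab
  have hV := Vtrap_monotoneOn (c := c) (d := d) hab.le (by linarith)
  refine MonotoneOn.Icc_union_Icc ?_ ?_ hm₁.le hm₂.le
  · refine MonotoneOn.congr (fun x hx y hy hxy => ?_) (trapReduced_eqOn_left₁ k).symm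
    have : 0 ≤ 1 - k := by linarith
    gcongr
    exact hV hx.1 hy.1 hxy
  · refine MonotoneOn.congr (fun x hx y hy hxy => ?_) (trapReduced_eqOn_left₂ k hab).symm
    have : 0 ≤ 1 + k := by linarith
    gcongr
    exact hV (hm₁.le.trans hx.1) (hm₁.le.trans hy.1) hxy

lemma trapReduced_monotoneOn_mid (hab : a < b) (hbc : b < c) (hcd : c < d) (hk₀ : -1 ≤ k)
    (hk₁ : k ≤ 1) : MonotoneOn (trapReduced a b c d k) (Icc b c) := by
  have hL := Ltrap_monotone (a := a) (b := b) (c := c) (d := d) (by linarith)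
  refine MonotoneOn.Icc_union_Icc (m := (b + c) / 2) ?_ ?_ (by linarith) (by linarith)
  · refine MonotoneOn.congr (fun x _ y _ hxy => ?_) (trapReduced_eqOn_mid₁ k hab).symm
    have : 0 ≤ 1 - k := by linarith
    gcongr
    exact hL hxy
  · refine MonotoneOn.congr (fun x _ y _ hxy => ?_) (trapReduced_eqOn_mid₂ k hab hbc).symm
    have : 0 ≤ 1 + k := by linarith
    gcongr
    exact hL hxy

lemma trapReduced_monotoneOn_right (hab : a < b) (hbc : b < c) (hcd : c < d) (hk₀ : -1 ≤ k)
    (hk₁ : k ≤ 1) : MonotoneOn (trapReduced a b c d k) (Icc c d) := by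
  obtain ⟨hm₁, hm₂⟩ := sub_div_sqrt_two_mem_Ioo hcd
  have hW := Wtrap_antitoneOn (a := a) (b := b) hcd.le (by linarith)
  refine MonotoneOn.Icc_union_Icc ?_ ?_ hm₁.le hm₂.le
  · refine MonotoneOn.congr (fun x hx y hy hxy => ?_)
      (trapReduced_eqOn_right₁ k hab hbc hcd).symm
    have : 0 ≤ 1 - k := by linarith
    gcongr
    exact hW (hx.2.trans hm₂.le) (hy.2.trans hm₂.le) hxy
  · refine MonotoneOn.congr (fun x hx y hy hxy => ?_)
      (trapReduced_eqOn_right₂ k hab hbc hcd).symm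
    have : 0 ≤ 1 + k := by linarith
    gcongr
    exact hW hx.2 hy.2 hxy

theorem trapReduced_monotone_of_mem_Icc (hab : a < b) (hbc : b < c) (hcd : c < d)
    (hk : k ∈ Icc (-1) 1) : Monotone (trapReduced a b c d k) := by
  obtain ⟨hk₀, hk₁⟩ := hk
  have hd : a ≤ d := (hab.trans (hbc.trans hcd)).le
  have hIic : MonotoneOn (trapReduced a b c d k) (Iic d) := by
    rw [← Iic_union_Icc_eq_Iic hd]
    refine (monotoneOn_const.congr (trapReduced_eqOn_Iic k).symm).union_right ?_ isGreatest_Iic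
      (isLeast_Icc hd)
    exact (trapReduced_monotoneOn_left k hab hbc hcd hk₀ hk₁).Icc_union_Icc
      ((trapReduced_monotoneOn_mid k hab hbc hcd hk₀ hk₁).Icc_union_Icc
        (trapReduced_monotoneOn_right k hab hbc hcd hk₀ hk₁) hbc.le hcd.le)
      hab.le (hbc.trans hcd).le
  exact hIic.Iic_union_Ici (monotoneOn_const.congr (trapReduced_eqOn_Ici k hab hbc hcd).symm)

end Trapezoid

theorem trapReduced_monotone (a b c d θl θr α : ℝ) (hab : a < b) (hbc : b < c)
    (hcd : c < d)
    (hθl : θl ∈ Set.Icc (0 : ℝ) 1) (hθr : θr ∈ Set.Icc (0 : ℝ) 1)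
    (hα : α ∈ Set.Ioo (0 : ℝ) 1) :
    ∀ x y : ℝ, x ≤ y →
      trapReduced a b c d (α * θl - (1 - α) * θr) x
        ≤ trapReduced a b c d (α * θl - (1 - α) * θr) y := by
  obtain ⟨hl₀, hl₁⟩ := hθl
  obtain ⟨hr₀, hr₁⟩ := hθr
  obtain ⟨hα₀, hα₁⟩ := hα
  exact fun x y hxy =>
    trapReduced_monotone_of_mem_Icc _ hab hbc hcd ⟨by nlinarith, by nlinarith⟩ hxy
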